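/- For every integer m ≥ 1, every real q > 1, and all real x, y, one has p_m(x | y, q^{-(m-1)/2}, q) = ∏_{j=1}^{i} v_{2j-1}(x, -y, q) if m = 2i, and = ∏_{j=0}^{i} v_{2j}(x, -y, q) if m = 2i+1. -/
import Mathlib


/-- `[n]_q = 1 + q + ⋯ + q^{n-1}`. -/
def qInt (q : ℝ) (n : ℕ) : ℝ := ∑ i ∈ Finset.range n, q ^ i

/-- The Al-Salam-Chihara polynomials `p_n(x|y,ρ,q)`:
`p_0 = 1`, `p_1 = x - ρy`, and
`p_{n+2} = (x - ρyq^{n+1})·p_{n+1} - (1 - ρ²q^n)·[n+1]_q·p_n`. -/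
noncomputable def ascP (q ρ y x : ℝ) : ℕ → ℝ
  | 0 => 1
  | 1 => x - ρ * y
  | n + 2 => (x - ρ * y * q ^ (n + 1)) * ascP q ρ y x (n + 1)
      - (1 - ρ ^ 2 * q ^ n) * qInt q (n + 1) * ascP q ρ y x n

/-- `v_n(x,y,q)`: `v_0 = x + y` and for `n ≥ 1`,
`v_n = x² + y² + xy(q^{n/2} + q^{-n/2}) - (q^n + q^{-n} - 2)/(q-1)`. -/
noncomputable def vfun (q x y : ℝ) (n : ℕ) : ℝ :=
  if n = 0 then x + y
  else x ^ 2 + y ^ 2 + x * y * (q ^ ((n : ℝ) / 2) + q ^ (-(n : ℝ) / 2))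
    - (q ^ (n : ℝ) + q ^ (-(n : ℝ)) - 2) / (q - 1)

lemma qInt_eq {q : ℝ} (hq : q ≠ 1) (n : ℕ) : qInt q n = (q ^ n - 1) / (q - 1) :=
  geom_sum_eq hq n

lemma ascP_succ (q ρ y x : ℝ) (n : ℕ) : ascP q ρ y x (n + 2)
    = (x - ρ * y * q ^ (n + 1)) * ascP q ρ y x (n + 1)
      - (1 - ρ ^ 2 * q ^ n) * qInt q (n + 1) * ascP q ρ y x n := rfl

/-- Contiguous relation linking parameters `ρ` and `qρ`. -/
lemma ascP_contig (q : ℝ) (hq0 : q ≠ 0) (hq : q ≠ 1) (ρ y x : ℝ) (n : ℕ) :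
    ascP q ρ y x (n + 2) = ascP q (q * ρ) y x (n + 2)
      + ρ * (q ^ (n + 2) - 1) * y * ascP q (q * ρ) y x (n + 1)
      - ρ ^ 2 * (q ^ (n + 2) - 1) * (q ^ (n + 1) - 1) / (q - 1) * ascP q (q * ρ) y x n := by
  have hq1 : q - 1 ≠ 0 := sub_ne_zero.mpr hq
  induction n using Nat.twoStepInduction with
  | zero =>
    simp only [ascP, qInt, Finset.sum_range_succ, Finset.sum_range_zero]
    field_simp
    ring
  | one =>
    simp only [ascP, qInt, Finset.sum_range_succ, Finset.sum_range_zero]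
    field_simp
    ring
  | more k ih1 ih2 =>
    rw [ascP_succ q ρ y x (k + 2), ih2, ih1]
    rw [ascP_succ q (q*ρ) y x (k + 2), ascP_succ q (q*ρ) y x (k + 1),
        ascP_succ q (q*ρ) y x k]
    rw [qInt_eq hq, qInt_eq hq, qInt_eq hq]
    generalize ascP q (q*ρ) y x (k+1) = A
    generalize ascP q (q*ρ) y x k = B
    have h1 : q ^ (k+1) = q ^ k * q := pow_succ q k
    have h2 : q ^ (k+2) = q ^ k * q^2 := by ring
    have h3 : q ^ (k+3) = q ^ k * q^3 := by ring
    have h4 : q ^ (k+4) = q ^ k * q^4 := by ring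
    rw [h1, h2, h3, h4]
    generalize q ^ k = Q
    field_simp
    ring

/-- The key two-step factorization. -/
lemma ascP_key (q : ℝ) (hq1 : 1 < q) (x y : ℝ) (k : ℕ) :
    ascP q (q ^ (-(((k:ℝ)+3) - 1)/2)) y x (k+3)
      = vfun q x (-y) (k+2) * ascP q (q ^ (-(((k:ℝ)+1) - 1)/2)) y x (k+1) := by
  have hq0 : (0:ℝ) < q := lt_trans one_pos hq1
  have hqn0 : q ≠ 0 := ne_of_gt hq0
  have hqn1 : q ≠ 1 := hq1.ne'
  have hq10 : q - 1 ≠ 0 := sub_ne_zero.mpr hqn1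
  set u : ℝ := q ^ (((k:ℝ)+2)/2) with hu
  have hupos : 0 < u := Real.rpow_pos_of_pos hq0 _
  have hun0 : u ≠ 0 := ne_of_gt hupos
  have e2 : (-(((k:ℝ)+3) - 1)/2) = -(((k:ℝ)+2)/2) := by ring
  have hρ : q ^ (-(((k:ℝ)+3) - 1)/2) = u⁻¹ := by
    rw [e2, Real.rpow_neg hq0.le, hu]
  have e3 : (-(((k:ℝ)+1) - 1)/2) = -((k:ℝ)/2) := by ring
  have hmul : q * u⁻¹ = q ^ (-((k:ℝ)/2)) := by
    have h := Real.rpow_add hq0 1 (-(((k:ℝ)+2)/2))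
    rw [Real.rpow_one] at h
    rw [hu, ← Real.rpow_neg hq0.le, ← h]
    congr 1
    ring
  have hsq : u ^ 2 = q ^ (k+2) := by
    rw [hu, ← Real.rpow_natCast (q ^ (((k:ℝ)+2)/2)) 2, ← Real.rpow_mul hq0.le,
        ← Real.rpow_natCast q (k+2)]
    congr 1
    push_cast
    ring
  rw [hρ, e3]
  have C := ascP_contig q hqn0 hqn1 u⁻¹ y x (k+1)
  rw [hmul] at C
  rw [show k+1+2 = k+3 from rfl, show k+1+1 = k+2 from rfl] at C
  rw [C]
  rw [ascP_succ q _ y x (k+1), ascP_succ q _ y x k]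
  have hv : vfun q x (-y) (k+2) = x^2 + (-y)^2 + x*(-y)*(u + u⁻¹)
      - (q^(k+2) + (q^(k+2))⁻¹ - 2)/(q-1) := by
    rw [vfun, if_neg (by omega : ¬(k+2 = 0))]
    have c1 : (((k+2:ℕ)):ℝ) = (k:ℝ)+2 := by push_cast; ring
    rw [c1]
    rw [show (-((k:ℝ)+2)/2) = -(((k:ℝ)+2)/2) by ring, Real.rpow_neg hq0.le, ← hu]
    rw [show q ^ ((k:ℝ)+2) = q ^ (k+2) by
      rw [← Real.rpow_natCast q (k+2)]; congr 1; push_cast; ring]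
    rw [show q ^ (-((k:ℝ)+2)) = (q ^ (k+2))⁻¹ by
      rw [Real.rpow_neg hq0.le]; congr 1
      rw [← Real.rpow_natCast q (k+2)]; congr 1; push_cast; ring]
  rw [hv]
  rw [← hmul]
  rw [qInt_eq hqn1, qInt_eq hqn1]
  generalize ascP q (q * u⁻¹) y x (k+1) = A
  generalize ascP q (q * u⁻¹) y x k = B
  have h1 : q ^ (k+1) = q ^ k * q := pow_succ q k
  have h2 : q ^ (k+2) = q ^ k * q^2 := by ring
  have h3 : q ^ (k+3) = q ^ k * q^3 := by ring
  have hsq' : u^2 = q^k * q^2 := by rw [hsq]; ring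
  rw [h1, h2, h3]
  have hk : q ^ k = u^2 / q^2 := by rw [hsq']; field_simp
  rw [hk]
  field_simp
  ring

lemma ascP_base1 (q : ℝ) (x y : ℝ) :
    ascP q (q ^ (-((1:ℝ)-1)/2)) y x 1 = vfun q x (-y) 0 := by
  rw [show (-((1:ℝ)-1)/2) = 0 by ring, Real.rpow_zero]
  simp [ascP, vfun]
  ring

lemma ascP_base2 (q : ℝ) (hq1 : 1 < q) (x y : ℝ) :
    ascP q (q ^ (-((2:ℝ)-1)/2)) y x 2 = vfun q x (-y) 1 := by
  have hq0 : (0:ℝ) < q := lt_trans one_pos hq1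
  have hq10 : q - 1 ≠ 0 := sub_ne_zero.mpr hq1.ne'
  set u : ℝ := q ^ ((1:ℝ)/2) with hu
  have hun0 : u ≠ 0 := ne_of_gt (Real.rpow_pos_of_pos hq0 _)
  have hρ : q ^ (-((2:ℝ)-1)/2) = u⁻¹ := by
    rw [show (-((2:ℝ)-1)/2) = -((1:ℝ)/2) by ring, Real.rpow_neg hq0.le, hu]
  have hsq : u ^ 2 = q := by
    rw [hu, ← Real.rpow_natCast (q ^ ((1:ℝ)/2)) 2, ← Real.rpow_mul hq0.le]
    norm_num
  have hv : vfun q x (-y) 1 = x^2 + (-y)^2 + x*(-y)*(u + u⁻¹) - (q + q⁻¹ - 2)/(q-1) := by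
    rw [vfun, if_neg (by omega : ¬(1 = 0))]
    push_cast
    rw [show (-(1:ℝ)/2) = -((1:ℝ)/2) by ring, Real.rpow_neg hq0.le, ← hu,
        Real.rpow_one, show (-(1:ℝ)) = ((-1 : ℤ) : ℝ) by norm_num, Real.rpow_intCast]
    norm_num
  rw [hρ, hv]
  show (x - u⁻¹ * y * q ^ (0+1)) * (x - u⁻¹ * y) - (1 - (u⁻¹)^2 * q^0) * qInt q 1 * 1 = _
  simp only [qInt, Finset.sum_range_one, pow_zero, pow_one]
  have hq' : q = u^2 := hsq.symm
  have h1 : u^2 - 1 ≠ 0 := by rw [hsq]; exact hq10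
  rw [hq']
  field_simp
  ring

lemma ascP_master (q : ℝ) (hq1 : 1 < q) (x y : ℝ) : ∀ m : ℕ, 1 ≤ m →
    ascP q (q ^ (-((m:ℝ)-1)/2)) y x m =
      if m % 2 = 0 then ∏ j ∈ Finset.Icc 1 (m/2), vfun q x (-y) (2*j-1)
      else ∏ j ∈ Finset.range (m/2+1), vfun q x (-y) (2*j) := by
  intro m
  induction m using Nat.strong_induction_on with
  | _ m ih =>
    match m, ih with
    | 0, _ => intro h; omega
    | 1, _ =>
      intro _
      rw [if_neg (by omega)]
      simpa using ascP_base1 q x y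
    | 2, _ =>
      intro _
      rw [if_pos (by omega)]
      rw [show (((2:ℕ)):ℝ) = (2:ℝ) by norm_num]
      rw [ascP_base2 q hq1 x y]
      rw [show (2:ℕ)/2 = 1 from rfl, Finset.Icc_self, Finset.prod_singleton]
    | (k+3), ih =>
      intro _
      have hk := ih (k+1) (by omega) (by omega)
      have K := ascP_key q hq1 x y k
      rw [show (((k+3:ℕ)):ℝ) = (k:ℝ)+3 by push_cast; ring]
      rw [K]
      rw [show (((k+1:ℕ)):ℝ) = (k:ℝ)+1 by push_cast; ring] at hk
      rw [hk]
      by_cases hp : (k+1) % 2 = 0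
      · rw [if_pos hp, if_pos (by omega : (k+3) % 2 = 0)]
        rw [show (k+3)/2 = (k+1)/2 + 1 by omega]
        rw [Finset.prod_Icc_succ_top (by omega : 1 ≤ (k+1)/2 + 1)]
        rw [show 2*((k+1)/2+1)-1 = k+2 by omega]
        ring
      · rw [if_neg hp, if_neg (by omega : ¬(k+3) % 2 = 0)]
        rw [show (k+3)/2 = (k+1)/2 + 1 by omega]
        conv_rhs => rw [Finset.prod_range_succ]
        rw [show 2*((k+1)/2+1) = k+2 by omega]
        ring

theorem stmt4 (m : ℕ) (hm : 1 ≤ m) (q : ℝ) (hq1 : 1 < q) (x y : ℝ) :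
    (∀ i : ℕ, m = 2 * i →
      ascP q (q ^ (-((m : ℝ) - 1) / 2)) y x m = ∏ j ∈ Finset.Icc 1 i, vfun q x (-y) (2 * j - 1)) ∧
    (∀ i : ℕ, m = 2 * i + 1 →
      ascP q (q ^ (-((m : ℝ) - 1) / 2)) y x m = ∏ j ∈ Finset.range (i + 1), vfun q x (-y) (2 * j)) := by
  have M := ascP_master q hq1 x y m hm
  constructor
  · rintro i rfl
    rw [if_pos (by omega), show 2*i/2 = i by omega] at M
    exact M
  · rintro i rfl
    rw [if_neg (by omega), show (2*i+1)/2 + 1 = i + 1 by omega] at M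
    exact M
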